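/- For every natural number n and every Γ ∈ {Σ, Π}, the least Γ¹ₙ-reflecting ordinal is countable; indeed, the set of Σ¹ₙ-reflecting ordinals and the set of Π¹ₙ-reflecting ordinals each contain a club subset of ω₁. -/

import Mathlib

open scoped Classical

/-! # Core framework: second-order logic over levels of Gödel's `L` -/

/-- The von Neumann natural numbers inside `ZFSet`. -/
noncomputable def natToZF : ℕ → ZFSet.{0}
  | 0 => ∅
  | n+1 => insert (natToZF n) (natToZF n)

/-- Formulas of second-order logic in the language of set theory (de Bruijn indices,
first-order variables and second-order (subset) variables). -/
inductive SOFormula : Type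
  | memFF : ℕ → ℕ → SOFormula        -- xᵢ ∈ xⱼ
  | eqFF  : ℕ → ℕ → SOFormula        -- xᵢ = xⱼ
  | memFS : ℕ → ℕ → SOFormula        -- xᵢ ∈ Xⱼ
  | not   : SOFormula → SOFormula
  | and   : SOFormula → SOFormula → SOFormula
  | allFO : SOFormula → SOFormula
  | exFO  : SOFormula → SOFormula
  | allSO : SOFormula → SOFormula
  | exSO  : SOFormula → SOFormula

/-- Prepend a value to a valuation (de Bruijn style). -/
def consF {α : Sort _} (a : α) (v : ℕ → α) : ℕ → α
  | 0 => a
  | n+1 => v n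

/-- Satisfaction of a second-order formula in the structure `(A, ∈)`, where first-order
quantifiers range over the elements of `A`, and second-order quantifiers range over those
subsets `S` of `A` satisfying the predicate `D` (taking `D := fun _ => True` gives full
second-order logic, i.e. quantification over the full powerset of `A`; other choices of `D`
give the relativization of satisfaction to an inner model or a generic extension). -/
def SOSatIn (D : Set ZFSet.{0} → Prop) (A : ZFSet.{0}) :
    SOFormula → (ℕ → ZFSet.{0}) → (ℕ → Set ZFSet.{0}) → Prop
  | .memFF i j, v, _ => v i ∈ v j
  | .eqFF i j, v, _ => v i = v j
  | .memFS i j, v, V => v i ∈ V j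
  | .not φ, v, V => ¬ SOSatIn D A φ v V
  | .and φ ψ, v, V => SOSatIn D A φ v V ∧ SOSatIn D A ψ v V
  | .allFO φ, v, V => ∀ a : ZFSet, a ∈ A → SOSatIn D A φ (consF a v) V
  | .exFO φ, v, V => ∃ a : ZFSet, a ∈ A ∧ SOSatIn D A φ (consF a v) V
  | .allSO φ, v, V => ∀ S : Set ZFSet, S ⊆ A.toSet → D S → SOSatIn D A φ v (consF S V)
  | .exSO φ, v, V => ∃ S : Set ZFSet, S ⊆ A.toSet ∧ D S ∧ SOSatIn D A φ v (consF S V)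

/-- Full (unrelativized) second-order satisfaction over `(A, ∈)`. -/
def SOSat (A : ZFSet.{0}) : SOFormula → (ℕ → ZFSet.{0}) → (ℕ → Set ZFSet.{0}) → Prop :=
  SOSatIn (fun _ => True) A

/-- A formula with no second-order quantifiers ("arithmetic" / second-order quantifier free). -/
def NoSOQuant : SOFormula → Prop
  | .memFF _ _ => True
  | .eqFF _ _ => True
  | .memFS _ _ => True
  | .not φ => NoSOQuant φ
  | .and φ ψ => NoSOQuant φ ∧ NoSOQuant ψ
  | .allFO φ => NoSOQuant φ
  | .exFO φ => NoSOQuant φ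
  | .allSO _ => False
  | .exSO _ => False

mutual
  /-- `Σ¹ₙ` formulas: `n` alternating blocks of second-order quantifiers, starting with `∃`,
  in front of a second-order quantifier free matrix. -/
  inductive IsSigmaSO : ℕ → SOFormula → Prop
    | arith {φ : SOFormula} (n : ℕ) : NoSOQuant φ → IsSigmaSO n φ
    | exq {n : ℕ} {φ : SOFormula} : IsPiSO n φ → IsSigmaSO (n+1) (SOFormula.exSO φ)
    | exq2 {n : ℕ} {φ : SOFormula} : IsSigmaSO (n+1) φ → IsSigmaSO (n+1) (SOFormula.exSO φ)
  /-- `Π¹ₙ` formulas. -/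
  inductive IsPiSO : ℕ → SOFormula → Prop
    | arith {φ : SOFormula} (n : ℕ) : NoSOQuant φ → IsPiSO n φ
    | allq {n : ℕ} {φ : SOFormula} : IsSigmaSO n φ → IsPiSO (n+1) (SOFormula.allSO φ)
    | allq2 {n : ℕ} {φ : SOFormula} : IsPiSO (n+1) φ → IsPiSO (n+1) (SOFormula.allSO φ)
end

/-- The two pointclasses `Σ` and `Π`. -/
inductive SOClass : Type
  | sigma : SOClass
  | pi : SOClass

/-- `Γ¹ₙ` formulas, for `Γ ∈ {Σ, Π}`. -/
def IsGammaSO : SOClass → ℕ → SOFormula → Prop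
  | .sigma => IsSigmaSO
  | .pi => IsPiSO

/-- `x` is a subset of `A` which is definable over `(A, ∈)` by a first-order formula
with parameters from `A`. -/
def DefinableSub (A x : ZFSet.{0}) : Prop :=
  ∃ (φ : SOFormula) (v : ℕ → ZFSet), NoSOQuant φ ∧ (∀ n, v n ∈ A) ∧
    ∀ y, y ∈ x ↔ y ∈ A ∧ SOSat A φ (consF y v) (fun _ => ∅)

/-- The definable powerset operation. -/
noncomputable def defPow (A : ZFSet.{0}) : ZFSet.{0} :=
  ZFSet.sep (fun x => DefinableSub A x) (ZFSet.powerset A)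

/-- The `o`-th level `L_o` of Gödel's constructible hierarchy. -/
noncomputable def LSet (o : Ordinal.{0}) : ZFSet.{0} :=
  Ordinal.limitRecOn o ∅ (fun _ ih => defPow ih)
    (fun o' _ ih => ZFSet.sUnion (ZFSet.range (fun i : o'.ToType =>
      ih ((@Ordinal.ToType.mk o').symm i).1 ((@Ordinal.ToType.mk o').symm i).2)))

/-- A set is constructible if it belongs to some level of the `L`-hierarchy. -/
def Constructible (x : ZFSet.{0}) : Prop := ∃ o : Ordinal.{0}, x ∈ LSet o

/-- The collection of subsets of the universe that exist in `L`
(used to relativize second-order quantifiers to `L`). -/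
def ConstructibleD : Set ZFSet.{0} → Prop :=
  fun S => ∃ z : ZFSet, Constructible z ∧ S = z.toSet

/-- The von Neumann ordinal corresponding to an `Ordinal`. -/
noncomputable def ordToZF (o : Ordinal.{0}) : ZFSet.{0} :=
  ZFSet.range (fun i : o.ToType =>
    have : ((@Ordinal.ToType.mk o).symm i).1 < o := ((@Ordinal.ToType.mk o).symm i).2
    ordToZF ((@Ordinal.ToType.mk o).symm i).1)
  termination_by o
  decreasing_by exact this

/-- The valuation assigning the (von Neumann codes of the) ordinal parameters
`β 0, …, β (l-1)` to the first `l` first-order variables. -/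
noncomputable def paramVal (l : ℕ) (β : ℕ → Ordinal.{0}) : ℕ → ZFSet.{0} :=
  fun i => if i < l then ordToZF (β i) else ∅

/-- `α` is `Γ¹ₙ`-reflecting, with second-order quantifiers relativized to `D`:
for every tuple `β 0 < … < β (l-1) < α` and every `Γ¹ₙ` formula `φ`, if `L_α ⊨ φ(β⃗)`
then there is `α'` with `β (l-1) < α' < α` and `L_{α'} ⊨ φ(β⃗)`. -/
def ReflectingIn (D : Set ZFSet.{0} → Prop) (Γ : SOClass) (n : ℕ) (α : Ordinal.{0}) : Prop :=
  ∀ (l : ℕ) (β : ℕ → Ordinal.{0}),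
    (∀ i j, i < j → j < l → β i < β j) → (∀ i, i < l → β i < α) →
    ∀ φ : SOFormula, IsGammaSO Γ n φ →
      SOSatIn D (LSet α) φ (paramVal l β) (fun _ => ∅) →
      ∃ α' : Ordinal, (∀ i, i < l → β i < α') ∧ α' < α ∧
        SOSatIn D (LSet α') φ (paramVal l β) (fun _ => ∅)

/-- `α` is `Γ¹ₙ`-reflecting (full second-order logic, i.e. computed in `V`). -/
def Reflecting : SOClass → ℕ → Ordinal.{0} → Prop := ReflectingIn (fun _ => True)

/-- The least `Γ¹ₙ`-reflecting ordinal, relativized to `D`. -/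
noncomputable def leastReflecting (D : Set ZFSet.{0} → Prop) (Γ : SOClass) (n : ℕ) :
    Ordinal.{0} :=
  sInf {α | ReflectingIn D Γ n α}

/-- `σ¹ₙ`, the least `Σ¹ₙ`-reflecting ordinal. -/
noncomputable def sigma1 (n : ℕ) : Ordinal.{0} := leastReflecting (fun _ => True) .sigma n

/-- `π¹ₙ`, the least `Π¹ₙ`-reflecting ordinal. -/
noncomputable def pi1 (n : ℕ) : Ordinal.{0} := leastReflecting (fun _ => True) .pi n

/-- `(σ¹ₙ)^L`. -/
noncomputable def sigma1L (n : ℕ) : Ordinal.{0} := leastReflecting ConstructibleD .sigma n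

/-- `(π¹ₙ)^L`. -/
noncomputable def pi1L (n : ℕ) : Ordinal.{0} := leastReflecting ConstructibleD .pi n

/-- The first uncountable ordinal `ω₁` (of `V`). -/
noncomputable def omega1V : Ordinal.{0} := (Cardinal.aleph 1).ord


/-- `C` is a club (closed unbounded set) in `κ`: it is unbounded below `κ` and contains
every nonzero `δ < κ` in which it is unbounded. -/
def IsClubIn (C : Set Ordinal.{0}) (κ : Ordinal.{0}) : Prop :=
  (∀ β < κ, ∃ γ ∈ C, β < γ ∧ γ < κ) ∧
  (∀ δ < κ, δ ≠ 0 → (∀ β < δ, ∃ γ ∈ C, β < γ ∧ γ < δ) → δ ∈ C)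

/-! Fix, for every formula `φ` and countable parameters `β⃗`, the least countable `γ > β⃗` with
`L_γ ⊨ φ(β⃗)`, and let `g ξ` be the supremum of these witnesses over the countably many `φ` and
`β⃗ ≤ ξ`. Since `ω₁` is regular, `g` maps `ω₁` into itself, and its nonzero closure points below
`ω₁` form a club. At such a closure point `α`, any `φ(β⃗)` true in `L_α` already has its witness
below `α`, so `α` is reflecting for formulas of every complexity. -/

open Ordinal Cardinal Set

universe u

namespace SOFormula

def encode : SOFormula → ℕ
  | memFF i j => Nat.pair 0 (Nat.pair i j)
  | eqFF i j => Nat.pair 1 (Nat.pair i j)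
  | memFS i j => Nat.pair 2 (Nat.pair i j)
  | not φ => Nat.pair 3 φ.encode
  | and φ ψ => Nat.pair 4 (Nat.pair φ.encode ψ.encode)
  | allFO φ => Nat.pair 5 φ.encode
  | exFO φ => Nat.pair 6 φ.encode
  | allSO φ => Nat.pair 7 φ.encode
  | exSO φ => Nat.pair 8 φ.encode

theorem encode_injective : Function.Injective encode := by
  intro φ
  induction φ <;> intro ψ h <;> cases ψ <;> simp only [encode, Nat.pair_eq_pair] at h <;> grind

instance : Countable SOFormula := encode_injective.countable

end SOFormula

def closurePoints (g : Ordinal.{u} → Ordinal.{u}) : Set Ordinal.{u} :=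
  {α | α ≠ 0 ∧ ∀ ξ < α, g ξ < α}

theorem exists_mem_closurePoints_between {κ : Cardinal.{u}} (hκ : κ.IsRegular) (hκ₀ : ℵ₀ < κ)
    {g : Ordinal.{u} → Ordinal.{u}} (hg : ∀ ξ < κ.ord, g ξ < κ.ord) {b : Ordinal.{u}}
    (hb : b < κ.ord) : ∃ γ ∈ closurePoints g, b < γ ∧ γ < κ.ord := by
  -- `nfp F (b + 1)` is closed under `g` because `F x` bounds `g ζ` for every `ζ < x`.
  let F : Ordinal.{u} → Ordinal.{u} := fun x => ⨆ ζ : Iio x, Order.succ (g ζ)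
  have hF : ∀ x < κ.ord, F x < κ.ord := fun x hx => by
    refine Ordinal.lift_iSup_lt_of_lt_cof ?_ fun ζ =>
      (isSuccLimit_ord hκ.aleph0_le).succ_lt (hg ζ (ζ.2.trans hx))
    rw [Cardinal.lift_id'.{u, u + 1}, Cardinal.mk_Iio_ordinal, ← lift_cof, hκ.cof_ord,
      Cardinal.lift_lt]
    exact lt_ord.mp hx
  have hgF : ∀ {ξ x}, ξ < x → g ξ < F x := fun {ξ x} h =>
    (Order.lt_succ _).trans_le (Ordinal.le_iSup (fun ζ : Iio x => Order.succ (g ζ)) ⟨ξ, h⟩)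
  have hb_lt : b < nfp F (Order.succ b) := (Order.lt_succ b).trans_le (le_nfp F _)
  refine ⟨nfp F (Order.succ b), ⟨hb_lt.ne_bot, fun ξ hξ => ?_⟩, hb_lt, ?_⟩
  · obtain ⟨k, hk⟩ := lt_nfp_iff.mp hξ
    calc g ξ < F (F^[k] (Order.succ b)) := hgF hk
      _ = F^[k + 1] (Order.succ b) := (Function.iterate_succ_apply' F k _).symm
      _ ≤ nfp F (Order.succ b) := iterate_le_nfp F _ (k + 1)
  · exact nfp_lt_ord (by rw [hκ.cof_ord]; exact hκ₀) hF
      ((isSuccLimit_ord hκ.aleph0_le).succ_lt hb)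

theorem isClubIn_closurePoints_inter_Iio {κ : Cardinal.{0}} (hκ : κ.IsRegular) (hκ₀ : ℵ₀ < κ)
    {g : Ordinal.{0} → Ordinal.{0}} (hg : ∀ ξ < κ.ord, g ξ < κ.ord) :
    IsClubIn (closurePoints g ∩ Iio κ.ord) κ.ord := by
  refine ⟨fun b hb => ?_, fun δ hδ hδ₀ hcof => ⟨⟨hδ₀, fun ξ hξ => ?_⟩, hδ⟩⟩
  · obtain ⟨γ, hγ, hbγ, hγκ⟩ := exists_mem_closurePoints_between hκ hκ₀ hg hb
    exact ⟨γ, ⟨hγ, hγκ⟩, hbγ, hγκ⟩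
  · obtain ⟨γ, ⟨⟨-, hγ⟩, -⟩, hξγ, hγδ⟩ := hcof ξ hξ
    exact (hγ ξ hξγ).trans hγδ

theorem omega1V_eq : omega1V = ω₁ := ord_aleph 1

theorem countable_Iio_of_lt_omega_one {o : Ordinal.{u}} (h : o < ω₁) : (Iio o).Countable := by
  rw [← le_aleph0_iff_set_countable, Cardinal.mk_Iio_ordinal, lift_le_aleph0, ← Order.lt_succ_iff,
    succ_aleph0, ← lt_ord, ord_aleph]
  exact h

theorem countable_Iic_of_lt_omega_one {o : Ordinal.{u}} (h : o < ω₁) : (Iic o).Countable :=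
  Order.Iio_succ o ▸ countable_Iio_of_lt_omega_one ((isSuccLimit_omega 1).succ_lt h)

theorem paramVal_congr {l : ℕ} {β β' : ℕ → Ordinal.{0}} (h : ∀ i < l, β i = β' i) :
    paramVal l β = paramVal l β' := by
  funext i
  unfold paramVal
  split_ifs with hi
  · rw [h i hi]
  · rfl

/-- Junk value `0` when no countable `γ` qualifies. -/
noncomputable def reflectionWitness (φ : SOFormula) (l : ℕ) (β : ℕ → Ordinal.{0}) :
    Ordinal.{0} :=
  sInf {γ | γ < omega1V ∧ (∀ i < l, β i < γ) ∧ SOSat (LSet γ) φ (paramVal l β) (fun _ => ∅)}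

theorem reflectionWitness_lt_omega1V (φ : SOFormula) (l : ℕ) (β : ℕ → Ordinal.{0}) :
    reflectionWitness φ l β < omega1V := by
  rcases Set.eq_empty_or_nonempty {γ | γ < omega1V ∧ (∀ i < l, β i < γ) ∧
      SOSat (LSet γ) φ (paramVal l β) (fun _ => ∅)} with h | h
  · rw [reflectionWitness, h, Ordinal.sInf_empty]
    exact omega1V_eq ▸ omega_pos 1
  · exact (csInf_mem h).1

theorem reflectionWitness_spec {φ : SOFormula} {l : ℕ} {β : ℕ → Ordinal.{0}} {α : Ordinal.{0}}
    (hα : α < omega1V) (hβ : ∀ i < l, β i < α) (h : SOSat (LSet α) φ (paramVal l β) (fun _ => ∅)) :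
    (∀ i < l, β i < reflectionWitness φ l β) ∧
      SOSat (LSet (reflectionWitness φ l β)) φ (paramVal l β) (fun _ => ∅) :=
  (csInf_mem ⟨α, hα, hβ, h⟩ : reflectionWitness φ l β ∈ _).2

theorem reflectionWitness_congr (φ : SOFormula) {l : ℕ} {β β' : ℕ → Ordinal.{0}}
    (h : ∀ i < l, β i = β' i) : reflectionWitness φ l β = reflectionWitness φ l β' := by
  simp +contextual only [reflectionWitness, paramVal_congr h, h]

noncomputable def reflectionBound (ξ : Ordinal.{0}) : Ordinal.{0} :=
  ⨆ p : SOFormula × Σ l, Fin l → Iic ξ,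
    reflectionWitness p.1 p.2.1 fun i => if h : i < p.2.1 then (p.2.2 ⟨i, h⟩ : Ordinal) else 0

theorem reflectionWitness_le_reflectionBound (φ : SOFormula) {l : ℕ} {β : ℕ → Ordinal.{0}}
    {ξ : Ordinal.{0}} (hβ : ∀ i < l, β i ≤ ξ) : reflectionWitness φ l β ≤ reflectionBound ξ := by
  refine le_of_eq_of_le ?_ (Ordinal.le_iSup _ (φ, ⟨l, fun i => ⟨β i, hβ i i.2⟩⟩))
  exact reflectionWitness_congr φ fun i hi => by simp [hi]

theorem reflectionBound_lt_omega1V {ξ : Ordinal.{0}} (hξ : ξ < omega1V) :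
    reflectionBound ξ < omega1V :=
  have := (countable_Iic_of_lt_omega_one (omega1V_eq ▸ hξ)).to_subtype
  omega1V_eq ▸ Ordinal.iSup_lt_omega_one fun _ => omega1V_eq ▸ reflectionWitness_lt_omega1V _ _ _

theorem reflecting_of_mem_closurePoints (Γ : SOClass) (n : ℕ) {α : Ordinal.{0}}
    (hα : α ∈ closurePoints reflectionBound) (hαω : α < omega1V) : Reflecting Γ n α := by
  intro l β _ hβα φ _ hφ
  let ξ := (Finset.range l).sup β
  have hξα : ξ < α :=
    (Finset.sup_lt_iff (pos_iff_ne_zero.mpr hα.1)).mpr fun i hi => hβα i (Finset.mem_range.mp hi)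
  have hβξ : ∀ i < l, β i ≤ ξ := fun i hi => Finset.le_sup (Finset.mem_range.mpr hi)
  obtain ⟨hβw, hw⟩ := reflectionWitness_spec hαω hβα hφ
  exact ⟨_, hβw, (reflectionWitness_le_reflectionBound φ hβξ).trans_lt (hα.2 ξ hξα), hw⟩

/-- For every `n < ω` and every `Γ ∈ {Σ, Π}`, the least `Γ¹ₙ`-reflecting
ordinal is countable; indeed, the set of `Γ¹ₙ`-reflecting ordinals contains a club subset
of `ω₁`. -/
theorem least_reflecting_countable_and_club (n : ℕ) (Γ : SOClass) :
    leastReflecting (fun _ => True) Γ n < omega1V ∧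
    ∃ C : Set Ordinal.{0}, C ⊆ {α | Reflecting Γ n α} ∧ IsClubIn C omega1V := by
  have hclub : IsClubIn (closurePoints reflectionBound ∩ Iio omega1V) omega1V :=
    isClubIn_closurePoints_inter_Iio isRegular_aleph_one aleph0_lt_aleph_one
      fun _ => reflectionBound_lt_omega1V
  have hrefl : closurePoints reflectionBound ∩ Iio omega1V ⊆ {α | Reflecting Γ n α} :=
    fun α ⟨hα, hαω⟩ => reflecting_of_mem_closurePoints Γ n hα hαω
  obtain ⟨γ, hγ, -, hγω⟩ := hclub.1 0 (omega1V_eq ▸ omega_pos 1)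
  exact ⟨(csInf_le' (hrefl hγ)).trans_lt hγω, _, hrefl, hclub⟩
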